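/- For every q > 3√3/2, all three roots of the cubic z³ − z + 1/q = 0 are real, exactly one of these roots lies in the open interval (0, 1/√3), this root q̃ is the smallest positive root of the cubic, and H̃(q) = φ(q̃) = ((1 − q̃)/(1 + q̃)) · exp(q̃/(1 − q̃²)). -/

import Mathlib

open Filter Set

/-- `w` is the root of `q (z^3 - z) + 1 = 0` with `Im w ≥ 0`, `Re w > 0` having the
smallest real part among all such roots. -/
def IsQtilde (q : ℝ) (w : ℂ) : Prop :=
  (q : ℂ) * (w ^ 3 - w) + 1 = 0 ∧ 0 ≤ w.im ∧ 0 < w.re ∧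
    ∀ z : ℂ, (q : ℂ) * (z ^ 3 - z) + 1 = 0 → 0 ≤ z.im → 0 < z.re → w.re ≤ z.re

/-- `H̃(q) = |(q̃ - 1)/(q̃ + 1)| · exp(q · Re(q̃²))` where `q̃` is the distinguished root. -/
noncomputable def Htilde (q : ℝ) : ℝ :=
  ‖(Classical.epsilon (IsQtilde q) - 1) / (Classical.epsilon (IsQtilde q) + 1)‖ *
    Real.exp (q * ((Classical.epsilon (IsQtilde q)) ^ 2).re)

/-- `φ(x) = ((1 - x)/(1 + x)) · exp(x/(1 - x²))`. -/
noncomputable def phi (x : ℝ) : ℝ :=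
  (1 - x) / (1 + x) * Real.exp (x / (1 - x ^ 2))

/-!
On `(0, 1/√3)` the map `t ↦ t³ - t` decreases from `0` to `-2/(3√3)`, so for
`0 < 1/q < 2/(3√3)` the cubic `z³ - z + 1/q` has exactly one root `x` there.
Dividing out `z - x` leaves `z² + xz + x² - 1`, whose discriminant `4 - 3x²` is positive,
so all roots are real and `x` is the distinguished root `q̃`. Then `|(x-1)/(x+1)| = (1-x)/(1+x)`
and the cubic gives `q x² = x/(1 - x²)`.
-/

theorem mul_cube_sub_self_add_one_eq_zero_iff {K : Type*} [Field K] {q : K} (hq : q ≠ 0)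
    (z : K) : q * (z ^ 3 - z) + 1 = 0 ↔ z ^ 3 - z + 1 / q = 0 := by
  rw [show z ^ 3 - z + 1 / q = (q * (z ^ 3 - z) + 1) / q by field_simp, div_eq_zero_iff,
    or_iff_left hq]

theorem cube_sub_self_injOn : InjOn (fun t : ℝ => t ^ 3 - t) {t | 3 * t ^ 2 < 1} := by
  intro x hx y hy hxy
  have hfactor : (x - y) * (x ^ 2 + x * y + y ^ 2 - 1) = 0 := by
    linear_combination hxy
  have hquad : x ^ 2 + x * y + y ^ 2 - 1 ≠ 0 := by
    simp only [mem_ofPred_eq] at hx hy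
    nlinarith [sq_nonneg (x - y)]
  exact sub_eq_zero.mp ((mul_eq_zero.mp hfactor).resolve_right hquad)

theorem three_mul_sq_lt_one_of_mem_Ioo {x : ℝ} (hx : x ∈ Ioo 0 (1 / √3)) : 3 * x ^ 2 < 1 := by
  have hs : Real.sqrt 3 ^ 2 = 3 := Real.sq_sqrt (by norm_num)
  have hxs : x * √3 < 1 := (lt_div_iff₀ (by positivity)).mp hx.2
  have hxs0 : 0 < x * √3 := mul_pos hx.1 (by positivity)
  calc 3 * x ^ 2 = (x * √3) ^ 2 := by rw [mul_pow, hs, mul_comm]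
    _ < 1 := by nlinarith

theorem exists_cube_sub_self_add_eq_zero_mem_Ioo {c : ℝ} (hc0 : 0 < c)
    (hc : c < 2 / (3 * √3)) : ∃ x ∈ Ioo 0 (1 / √3), x ^ 3 - x + c = 0 := by
  have hs : Real.sqrt 3 ^ 2 = 3 := Real.sq_sqrt (by norm_num)
  have hval : (1 / √3) ^ 3 - 1 / √3 = -(2 / (3 * √3)) := by
    field_simp
    linear_combination (-1 : ℝ) * hs
  have hsign : (0 : ℝ) ∈ Ioo ((1 / √3) ^ 3 - 1 / √3 + c) (0 ^ 3 - 0 + c) :=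
    ⟨by linarith, by simpa using hc0⟩
  exact intermediate_value_Ioo' (by positivity) (Continuous.continuousOn (by fun_prop)) hsign

theorem im_eq_zero_of_cube_sub_self_add_eq_zero {c x : ℝ} {z : ℂ} (hx : x ^ 3 - x + c = 0)
    (hx4 : 3 * x ^ 2 ≤ 4) (hz : z ^ 3 - z + c = 0) : z.im = 0 := by
  have hxC : (x : ℂ) ^ 3 - x + c = 0 := by exact_mod_cast congrArg Complex.ofReal hx
  have hfactor : (z - x) * (z ^ 2 + x * z + x ^ 2 - 1) = 0 := by
    linear_combination hz - hxC
  rcases mul_eq_zero.mp hfactor with hlin | hquad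
  · simp [sub_eq_zero.mp hlin]
  · set d : ℝ := √(4 - 3 * x ^ 2) / 2
    have hd : (d : ℂ) ^ 2 = (4 - 3 * x ^ 2) / 4 := by
      have : d ^ 2 = (4 - 3 * x ^ 2) / 4 := by
        rw [div_pow, Real.sq_sqrt (by linarith)]; norm_num
      exact_mod_cast this
    have hsq : (z + x / 2) ^ 2 = (d : ℂ) ^ 2 := by
      rw [hd]; linear_combination hquad
    rcases sq_eq_sq_iff_eq_or_eq_neg.mp hsq with h | h
    · simpa using congrArg Complex.im h
    · simpa using congrArg Complex.im h

theorem IsQtilde.unique {q : ℝ} {w w' : ℂ}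
    (hreal : ∀ z : ℂ, (q : ℂ) * (z ^ 3 - z) + 1 = 0 → z.im = 0)
    (hw : IsQtilde q w) (hw' : IsQtilde q w') : w = w' :=
  Complex.ext (le_antisymm (hw.2.2.2 w' hw'.1 hw'.2.1 hw'.2.2.1) (hw'.2.2.2 w hw.1 hw.2.1 hw.2.2.1))
    ((hreal w hw.1).trans (hreal w' hw'.1).symm)

theorem isQtilde_ofReal {q x : ℝ} (hreal : ∀ z : ℂ, (q : ℂ) * (z ^ 3 - z) + 1 = 0 → z.im = 0)
    (hx : q * (x ^ 3 - x) + 1 = 0) (hx0 : 0 < x)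
    (hmin : ∀ y : ℝ, q * (y ^ 3 - y) + 1 = 0 → 0 < y → x ≤ y) : IsQtilde q x := by
  refine ⟨by exact_mod_cast hx, by simp, by simpa using hx0, fun z hz _ hre => ?_⟩
  lift z to ℝ using hreal z hz
  exact hmin z (by exact_mod_cast hz) (by simpa using hre)

theorem norm_ofReal_sub_one_div_add_one {x : ℝ} (h0 : -1 < x) (h1 : x ≤ 1) :
    ‖((x : ℂ) - 1) / (x + 1)‖ = (1 - x) / (1 + x) := by
  rw [norm_div, ← Complex.ofReal_one, ← Complex.ofReal_sub, ← Complex.ofReal_add,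
    Complex.norm_real, Complex.norm_real, Real.norm_of_nonpos (by linarith),
    Real.norm_of_nonneg (by linarith), neg_sub, add_comm]

theorem Htilde_eq_phi_of_epsilon_eq {q x : ℝ} (hε : Classical.epsilon (IsQtilde q) = x)
    (hx : q * (x ^ 3 - x) + 1 = 0) (h0 : -1 < x) (h1 : x < 1) : Htilde q = phi x := by
  have hx2 : 1 - x ^ 2 ≠ 0 := by nlinarith
  have hexp : q * x ^ 2 = x / (1 - x ^ 2) := by
    rw [eq_div_iff hx2]; linear_combination -x * hx
  rw [Htilde, hε, norm_ofReal_sub_one_div_add_one h0 h1.le, ← Complex.ofReal_pow,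
    Complex.ofReal_re, hexp, phi]

theorem Htilde_eq_phi (q : ℝ) (hq : 3 * Real.sqrt 3 / 2 < q) :
    (∀ z : ℂ, z ^ 3 - z + 1 / (q : ℂ) = 0 → z.im = 0) ∧
    ∃ x : ℝ, x ^ 3 - x + 1 / q = 0 ∧ x ∈ Set.Ioo 0 (1 / Real.sqrt 3) ∧
      (∀ y : ℝ, y ^ 3 - y + 1 / q = 0 → y ∈ Set.Ioo 0 (1 / Real.sqrt 3) → y = x) ∧
      (∀ y : ℝ, y ^ 3 - y + 1 / q = 0 → 0 < y → x ≤ y) ∧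
      Htilde q = phi x := by
  have hq0 : 0 < q := lt_trans (by positivity) hq
  have hc : 1 / q < 2 / (3 * √3) := by
    rw [div_lt_div_iff₀ hq0 (by positivity)]; linarith
  obtain ⟨x, hxI, hx⟩ := exists_cube_sub_self_add_eq_zero_mem_Ioo (by positivity) hc
  have hx3 := three_mul_sq_lt_one_of_mem_Ioo hxI
  have hreal : ∀ z : ℂ, z ^ 3 - z + 1 / (q : ℂ) = 0 → z.im = 0 := fun z hz =>
    im_eq_zero_of_cube_sub_self_add_eq_zero hx (by linarith) (by exact_mod_cast hz)
  have huniq : ∀ y : ℝ, y ^ 3 - y + 1 / q = 0 → y ∈ Ioo 0 (1 / √3) → y = x := fun y hy hyI =>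
    cube_sub_self_injOn (three_mul_sq_lt_one_of_mem_Ioo hyI) hx3 (by simp only; linarith)
  have hmin : ∀ y : ℝ, y ^ 3 - y + 1 / q = 0 → 0 < y → x ≤ y := fun y hy hy0 =>
    le_of_not_gt fun hyx => hyx.ne (huniq y hy ⟨hy0, hyx.trans hxI.2⟩)
  have hiff := mul_cube_sub_self_add_one_eq_zero_iff (K := ℝ) hq0.ne'
  have hiffC := mul_cube_sub_self_add_one_eq_zero_iff (q := (q : ℂ)) (by exact_mod_cast hq0.ne')
  have hrealQ := fun z hz => hreal z ((hiffC z).1 hz)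
  have hQ : IsQtilde q x := isQtilde_ofReal hrealQ ((hiff x).2 hx) hxI.1
    fun y hy => hmin y ((hiff y).1 hy)
  have hε := (Classical.epsilon_spec ⟨_, hQ⟩).unique hrealQ hQ
  exact ⟨hreal, x, hx, hxI, huniq, hmin,
    Htilde_eq_phi_of_epsilon_eq hε ((hiff x).2 hx) (by linarith [hxI.1]) (by nlinarith)⟩
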